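/- The Laplace mechanism satisfies ε-differential privacy: if f : D → ℝ has l1-sensitivity Δf (i.e., |f(D) - f(D')| ≤ Δf for all neighboring databases D, D'), then the mechanism M(D) = f(D) + η, where η is drawn from the Laplace distribution with scale Δf/ε, satisfies Pr[M(D) ∈ O] ≤ e^ε · Pr[M(D') ∈ O] for all measurable sets O and all neighboring D, D'. -/
import Mathlib


open MeasureTheory Real

/-- The Laplace mechanism satisfies ε-differential privacy: if `f` has ℓ₁-sensitivity `Δ`
on neighboring databases, then adding Laplace noise of scale `Δ/ε` (i.e., releasing a
measure with density `(ε/(2Δ)) exp(-ε|x - f D|/Δ)` w.r.t. Lebesgue measure) satisfies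
`Pr[M(D) ∈ O] ≤ e^ε · Pr[M(D') ∈ O]` for all measurable `O` and neighboring `D, D'`. -/
theorem laplace_mechanism_dp
    {DB : Type*} (Neighbor : DB → DB → Prop)
    (f : DB → ℝ) (ε Δ : ℝ) (hε : 0 < ε) (hΔ : 0 < Δ)
    (hsens : ∀ D D', Neighbor D D' → |f D - f D'| ≤ Δ)
    (M : DB → Measure ℝ)
    (hM : ∀ D, M D =
      volume.withDensity (fun x => ENNReal.ofReal (ε / (2 * Δ) * exp (-(ε * |x - f D|) / Δ))))
    (D D' : DB) (hN : Neighbor D D') (O : Set ℝ) (hO : MeasurableSet O) :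
    M D O ≤ ENNReal.ofReal (exp ε) * M D' O := by
  rw [hM D, hM D', withDensity_apply _ hO, withDensity_apply _ hO,
    ← lintegral_const_mul' _ _ ENNReal.ofReal_ne_top]
  refine lintegral_mono fun x => ?_
  rw [← ENNReal.ofReal_mul (exp_nonneg _)]
  refine ENNReal.ofReal_le_ofReal ?_
  have hc : 0 ≤ ε / (2 * Δ) := by positivity
  have key : exp (-(ε * |x - f D|) / Δ) ≤ exp ε * exp (-(ε * |x - f D'|) / Δ) := by
    rw [← exp_add, exp_le_exp]
    have h1 : |x - f D'| ≤ |x - f D| + Δ := by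
      calc |x - f D'| = |(x - f D) + (f D - f D')| := by ring_nf
        _ ≤ |x - f D| + |f D - f D'| := abs_add_le _ _
        _ ≤ |x - f D| + Δ := by linarith [hsens D D' hN]
    have h3 : ε * (|x - f D'| - |x - f D|) / Δ ≤ ε := by
      rw [div_le_iff₀ hΔ]; nlinarith
    have h4 : (-(ε * |x - f D|)) / Δ - (-(ε * |x - f D'|)) / Δ
        = ε * (|x - f D'| - |x - f D|) / Δ := by ring
    linarith
  calc ε / (2 * Δ) * exp (-(ε * |x - f D|) / Δ)
      ≤ ε / (2 * Δ) * (exp ε * exp (-(ε * |x - f D'|) / Δ)) := by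
        exact mul_le_mul_of_nonneg_left key hc
    _ = exp ε * (ε / (2 * Δ) * exp (-(ε * |x - f D'|) / Δ)) := by ring
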